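/- arXiv:2605.18886 — 4 statements merged into one kernel-verified Lean document; each statement's English description precedes it below -/
import Mathlib

section
/- For bounded linear operators L₀ and L₁ on a Banach space and ε ∈ ℂ, setting L_ε = L₀ + ε L₁, Duhamel's principle holds: exp(t L_ε) = exp(t L₀) + ε ∫₀ᵗ exp((t−s) L₀) ∘ L₁ ∘ exp(s L_ε) ds for all t ≥ 0. -/
open intervalIntegral

/-!
Differentiate `s ↦ exp((t - s) • A) * exp(s • B)`: by the product rule its derivative is
`exp((t - s) • A) * (B - A) * exp(s • B)`, and integrating over `[0, t]` gives
`exp(t • B) - exp(t • A)` by the fundamental theorem of calculus. With `A = L₀` and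
`B = L₀ + ε • L₁` the difference `B - A` is `ε • L₁`.
-/

namespace NormedSpace

variable {𝔸 : Type*} [NormedRing 𝔸] [NormedAlgebra ℂ 𝔸] [CompleteSpace 𝔸]

theorem hasDerivAt_exp_ofReal_smul (A : 𝔸) (s : ℝ) :
    HasDerivAt (fun s : ℝ => exp ((s : ℂ) • A)) (exp ((s : ℂ) • A) * A) s := by
  simpa [Function.comp_def] using
    (hasDerivAt_exp_smul_const A (s : ℂ)).scomp s Complex.ofRealCLM.hasDerivAt

theorem continuous_exp_ofReal_smul (A : 𝔸) : Continuous fun s : ℝ => exp ((s : ℂ) • A) :=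
  continuous_iff_continuousAt.2 fun s => (hasDerivAt_exp_ofReal_smul A s).continuousAt

theorem hasDerivAt_exp_sub_smul_mul_exp_smul (A B : 𝔸) (t s : ℝ) :
    HasDerivAt (fun s : ℝ => exp (((t - s : ℝ) : ℂ) • A) * exp ((s : ℂ) • B))
      (exp (((t - s : ℝ) : ℂ) • A) * (B - A) * exp ((s : ℂ) • B)) s := by
  have hA : HasDerivAt (fun s : ℝ => exp (((t - s : ℝ) : ℂ) • A))
      (-(exp (((t - s : ℝ) : ℂ) • A) * A)) s := by
    refine ((hasDerivAt_exp_ofReal_smul A (t - s)).scomp s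
      ((hasDerivAt_id' s).const_sub t)).congr_deriv ?_
    simp
  refine (hA.mul (hasDerivAt_exp_ofReal_smul B s)).congr_deriv ?_
  rw [((Commute.refl B).smul_left (s : ℂ)).exp_left.eq]
  noncomm_ring

theorem exp_ofReal_smul_eq_add_integral (A B : 𝔸) (t : ℝ) :
    exp ((t : ℂ) • B) = exp ((t : ℂ) • A) +
      ∫ s in (0 : ℝ)..t, exp (((t - s : ℝ) : ℂ) • A) * (B - A) * exp ((s : ℂ) • B) := by
  have hcont : Continuous fun s : ℝ =>
      exp (((t - s : ℝ) : ℂ) • A) * (B - A) * exp ((s : ℂ) • B) :=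
    (((continuous_exp_ofReal_smul A).comp (continuous_sub_left t)).mul continuous_const).mul
      (continuous_exp_ofReal_smul B)
  rw [integral_eq_sub_of_hasDerivAt (fun s _ => hasDerivAt_exp_sub_smul_mul_exp_smul A B t s)
    (hcont.intervalIntegrable 0 t)]
  simp

end NormedSpace

theorem duhamel_principle_general
    (X : Type*) [NormedAddCommGroup X] [NormedSpace ℂ X] [CompleteSpace X]
    (L₀ L₁ : X →L[ℂ] X) (ε : ℂ) (Lε : X →L[ℂ] X) (hLε : Lε = L₀ + ε • L₁)
    (t : ℝ) :
    NormedSpace.exp ((t : ℂ) • Lε) =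
      NormedSpace.exp ((t : ℂ) • L₀) +
        ε • ∫ s in (0:ℝ)..t,
          NormedSpace.exp (((t - s : ℝ) : ℂ) • L₀) * L₁ * NormedSpace.exp ((s : ℂ) • Lε) := by
  have hdiff : Lε - L₀ = ε • L₁ := by rw [hLε, add_sub_cancel_left]
  rw [NormedSpace.exp_ofReal_smul_eq_add_integral L₀ Lε t, hdiff,
    ← integral_smul]
  simp only [mul_smul_comm, smul_mul_assoc]

/-- Duhamel's principle for a perturbed bounded generator on a Banach space. -/
theorem duhamel_principle
    (X : Type*) [NormedAddCommGroup X] [NormedSpace ℂ X] [CompleteSpace X]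
    (L₀ L₁ : X →L[ℂ] X) (ε : ℂ) (Lε : X →L[ℂ] X) (hLε : Lε = L₀ + ε • L₁)
    (t : ℝ) (ht : 0 ≤ t) :
    NormedSpace.exp ((t : ℂ) • Lε) =
      NormedSpace.exp ((t : ℂ) • L₀) +
        ε • ∫ s in (0:ℝ)..t,
          NormedSpace.exp (((t - s : ℝ) : ℂ) • L₀) * L₁ * NormedSpace.exp ((s : ℂ) • Lε) :=
  duhamel_principle_general X L₀ L₁ ε Lε hLε t
end

section
/- For bounded linear operators A and B on a Banach space, ‖exp(t(A+B)) − exp(tA) exp(tB)‖ ≤ t² ‖[A,B]‖ e^{t(‖A‖+‖B‖)} / 2 + O(t³), and more precisely ‖exp(t(A+B)) − exp(tA)exp(tB)‖ ≤ (t²/2)‖[A,B]‖ e^{t(‖A‖+‖B‖)} for all t ≥ 0, where [A,B] = AB − BA. -/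
/-!
Duhamel's formula along `F u = exp ((t - u) • (A + B)) * exp (u • A) * exp (u • B)`, which runs
from `exp (t • (A + B))` to `exp (t • A) * exp (t • B)`: its derivative is
`exp ((t - u) • (A + B)) * [exp (u • A), B] * exp (u • B)`. Applied once more to
`v ↦ exp (v • A) * B * exp ((u - v) • A)`, the same idea bounds `‖[exp (u • A), B]‖` by
`u ‖[A, B]‖ exp (u ‖A‖)`, so `‖F' u‖ ≤ u ‖[A, B]‖ exp (t (‖A‖ + ‖B‖))`, and integrating over
`[0, t]` gives the factor `t ^ 2 / 2`.
-/

open NormedSpace Set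

lemma norm_sub_le_of_norm_deriv_le_mul {E : Type*} [NormedAddCommGroup E] [NormedSpace ℝ E]
    {f f' : ℝ → E} {K t : ℝ} (ht : 0 ≤ t) (hf : ∀ u ∈ Icc 0 t, HasDerivAt f (f' u) u)
    (bound : ∀ u ∈ Ico 0 t, ‖f' u‖ ≤ K * u) : ‖f t - f 0‖ ≤ K * t ^ 2 / 2 := by
  have hB : ∀ u, HasDerivAt (fun u : ℝ => K * u ^ 2 / 2) (K * u) u := fun u => by
    refine (((hasDerivAt_pow 2 u).const_mul K).div_const 2).congr_deriv ?_
    push_cast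
    ring
  exact image_norm_le_of_norm_deriv_right_le_deriv_boundary (f := fun u => f u - f 0)
    (fun u hu => ((hf u hu).sub_const (f 0)).continuousAt.continuousWithinAt)
    (fun u hu => ((hf u (Ico_subset_Icc_self hu)).sub_const (f 0)).hasDerivWithinAt)
    (by simp) hB bound (right_mem_Icc.2 ht)

section

variable {M : Type*} [NormedRing M] [NormedAlgebra ℝ M]

lemma norm_exp_le_exp_norm (h1 : ‖(1 : M)‖ ≤ 1) (x : M) : ‖exp x‖ ≤ Real.exp ‖x‖ := by
  rw [exp_eq_tsum ℝ, Real.exp_eq_exp_ℝ, exp_eq_tsum_div]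
  refine (norm_tsum_le_tsum_norm (norm_expSeries_summable' x)).trans <|
    (norm_expSeries_summable' x).tsum_le_tsum (fun n => ?_) (Real.summable_pow_div_factorial _)
  rw [norm_smul, norm_inv, Real.norm_natCast, div_eq_inv_mul]
  gcongr
  rcases n with _ | n
  · simpa using h1
  · exact norm_pow_le' x n.succ_pos

lemma norm_exp_smul_le (h1 : ‖(1 : M)‖ ≤ 1) (a : M) {s : ℝ} (hs : 0 ≤ s) :
    ‖exp (s • a)‖ ≤ Real.exp (s * ‖a‖) := by
  simpa [norm_smul, abs_of_nonneg hs] using norm_exp_le_exp_norm h1 (s • a)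

variable [CompleteSpace M]

lemma hasDerivAt_exp_sub_smul (a : M) (s u : ℝ) :
    HasDerivAt (fun u : ℝ => exp ((s - u) • a)) (-(a * exp ((s - u) • a))) u := by
  simpa [Function.comp_def] using
    (hasDerivAt_exp_smul_const' a (s - u)).scomp u ((hasDerivAt_id u).const_sub s)

lemma hasDerivAt_exp_smul_mul_mul_exp_sub_smul (a b : M) (s u : ℝ) :
    HasDerivAt (fun u : ℝ => exp (u • a) * (b * exp ((s - u) • a)))
      (exp (u • a) * ((a * b - b * a) * exp ((s - u) • a))) u := by
  refine ((hasDerivAt_exp_smul_const a u).mul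
    ((hasDerivAt_exp_sub_smul a s u).const_mul b)).congr_deriv ?_
  noncomm_ring

lemma norm_exp_smul_mul_sub_mul_exp_smul_le (h1 : ‖(1 : M)‖ ≤ 1) (a b : M) {s : ℝ}
    (hs : 0 ≤ s) :
    ‖exp (s • a) * b - b * exp (s • a)‖ ≤ s * ‖a * b - b * a‖ * Real.exp (s * ‖a‖) := by
  have bound : ∀ u ∈ Ico 0 s,
      ‖exp (u • a) * ((a * b - b * a) * exp ((s - u) • a))‖ ≤
        ‖a * b - b * a‖ * Real.exp (s * ‖a‖) := fun u ⟨hu0, hus⟩ =>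
    calc _ ≤ Real.exp (u * ‖a‖) * (‖a * b - b * a‖ * Real.exp ((s - u) * ‖a‖)) :=
          norm_mul_le_of_le (norm_exp_smul_le h1 a hu0)
            (norm_mul_le_of_le le_rfl (norm_exp_smul_le h1 a (by linarith)))
      _ = ‖a * b - b * a‖ * Real.exp (s * ‖a‖) := by
          rw [show s * ‖a‖ = u * ‖a‖ + (s - u) * ‖a‖ by ring, Real.exp_add]
          ring
  have := norm_image_sub_le_of_norm_deriv_le_segment'
    (fun u _ => (hasDerivAt_exp_smul_mul_mul_exp_sub_smul a b s u).hasDerivWithinAt) bound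
    s (right_mem_Icc.2 hs)
  simpa [mul_comm s, mul_right_comm] using this

lemma hasDerivAt_exp_sub_smul_add_mul_exp_smul_mul_exp_smul (a b : M) (t u : ℝ) :
    HasDerivAt (fun u : ℝ => exp ((t - u) • (a + b)) * (exp (u • a) * exp (u • b)))
      (exp ((t - u) • (a + b)) * ((exp (u • a) * b - b * exp (u • a)) * exp (u • b))) u := by
  have hP : Commute (a + b) (exp ((t - u) • (a + b))) :=
    ((Commute.refl _).smul_right _).exp_right
  have hQ : Commute a (exp (u • a)) := ((Commute.refl _).smul_right _).exp_right
  refine ((hasDerivAt_exp_sub_smul (a + b) t u).mul ((hasDerivAt_exp_smul_const a u).mul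
    (hasDerivAt_exp_smul_const' b u))).congr_deriv ?_
  simp only [Pi.mul_apply]
  rw [hP.eq, ← hQ.eq]
  noncomm_ring

theorem norm_exp_smul_add_sub_exp_smul_mul_exp_smul_le (h1 : ‖(1 : M)‖ ≤ 1) (a b : M) {t : ℝ}
    (ht : 0 ≤ t) :
    ‖exp (t • (a + b)) - exp (t • a) * exp (t • b)‖ ≤
      t ^ 2 / 2 * ‖a * b - b * a‖ * Real.exp (t * (‖a‖ + ‖b‖)) := by
  have bound : ∀ u ∈ Ico 0 t,
      ‖exp ((t - u) • (a + b)) * ((exp (u • a) * b - b * exp (u • a)) * exp (u • b))‖ ≤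
        ‖a * b - b * a‖ * Real.exp (t * (‖a‖ + ‖b‖)) * u := fun u ⟨hu0, hut⟩ =>
    calc _ ≤ Real.exp ((t - u) * (‖a‖ + ‖b‖)) *
          (u * ‖a * b - b * a‖ * Real.exp (u * ‖a‖) * Real.exp (u * ‖b‖)) := by
          refine norm_mul_le_of_le ?_ (norm_mul_le_of_le
            (norm_exp_smul_mul_sub_mul_exp_smul_le h1 a b hu0) (norm_exp_smul_le h1 b hu0))
          refine (norm_exp_smul_le h1 _ (by linarith)).trans ?_
          gcongr
          exact norm_add_le a b
      _ = ‖a * b - b * a‖ * Real.exp (t * (‖a‖ + ‖b‖)) * u := by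
          rw [show t * (‖a‖ + ‖b‖) = (t - u) * (‖a‖ + ‖b‖) + u * ‖a‖ + u * ‖b‖ by ring,
            Real.exp_add, Real.exp_add]
          ring
  have := norm_sub_le_of_norm_deriv_le_mul ht
    (fun u _ => hasDerivAt_exp_sub_smul_add_mul_exp_smul_mul_exp_smul a b t u) bound
  rw [norm_sub_rev]
  simp only [sub_self, sub_zero, zero_smul, exp_zero, one_mul, mul_one] at this
  linarith

end

/-- First-order Trotter error bound for bounded operators. -/
theorem trotter_first_order_bound
    (X : Type*) [NormedAddCommGroup X] [NormedSpace ℂ X] [CompleteSpace X]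
    (A B : X →L[ℂ] X) (t : ℝ) (ht : 0 ≤ t) :
    ‖NormedSpace.exp ((t : ℂ) • (A + B)) -
        NormedSpace.exp ((t : ℂ) • A) * NormedSpace.exp ((t : ℂ) • B)‖ ≤
      t ^ 2 / 2 * ‖A * B - B * A‖ * Real.exp (t * (‖A‖ + ‖B‖)) := by
  simp only [Complex.coe_smul]
  exact norm_exp_smul_add_sub_exp_smul_mul_exp_smul_le ContinuousLinearMap.norm_id_le A B ht
end

section
/- Let L and P be linear operators on a finite-dimensional space with P² = P, L P = P L = 0, and ‖exp(tL)(I−P)‖ ≤ C e^{-γt} for γ > 0. Then the Drazin-type inverse L⁺ := -∫₀^∞ exp(tL)(I−P) dt is a well-defined bounded operator with ‖L⁺‖ ≤ C/γ, and it satisfies L L⁺ = L⁺ L = I − P. -/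
/-!
Put `F t = exp(tL)(I - P)`. Then `F' = L F`, and `L` commutes with `F t` because `LP = PL`, so
`L ∫ F = (∫ F) L = ∫ F' = F(∞) - F(0) = -(I - P)`. The exponential decay of `F` gives
`F(∞) = 0`, the integrability of `F`, and `‖∫ F‖ ≤ C ∫ e^{-γt} dt = C/γ`.
-/

open MeasureTheory Set Filter Topology NormedSpace

section ExponentialDecay

variable {E : Type*} [NormedAddCommGroup E] {f : ℝ → E} {C γ : ℝ}

theorem integrableOn_Ioi_of_norm_le_exp (hγ : 0 < γ)
    (hf : AEStronglyMeasurable f (volume.restrict (Ioi 0)))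
    (hdecay : ∀ t : ℝ, 0 ≤ t → ‖f t‖ ≤ C * Real.exp (-γ * t)) :
    IntegrableOn f (Ioi 0) :=
  ((exp_neg_integrableOn_Ioi 0 hγ).const_mul C).mono' hf <|
    (ae_restrict_iff' measurableSet_Ioi).2 <| ae_of_all _ fun t ht => hdecay t (le_of_lt ht)

theorem norm_integral_Ioi_le_of_norm_le_exp [NormedSpace ℝ E] (hγ : 0 < γ)
    (hdecay : ∀ t : ℝ, 0 ≤ t → ‖f t‖ ≤ C * Real.exp (-γ * t)) :
    ‖∫ t in Ioi (0 : ℝ), f t‖ ≤ C / γ := by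
  have hbound : ∀ᵐ t ∂volume.restrict (Ioi (0 : ℝ)), ‖f t‖ ≤ C * Real.exp (-γ * t) :=
    (ae_restrict_iff' measurableSet_Ioi).2 <| ae_of_all _ fun t ht => hdecay t (le_of_lt ht)
  calc ‖∫ t in Ioi (0 : ℝ), f t‖ ≤ ∫ t in Ioi (0 : ℝ), C * Real.exp (-γ * t) :=
        norm_integral_le_of_norm_le ((exp_neg_integrableOn_Ioi 0 hγ).const_mul C) hbound
    _ = C / γ := by
        rw [integral_const_mul, integral_exp_mul_Ioi (neg_lt_zero.2 hγ)]
        rw [mul_zero, Real.exp_zero, neg_div_neg_eq, mul_one_div]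

theorem tendsto_atTop_zero_of_norm_le_exp (hγ : 0 < γ)
    (hdecay : ∀ t : ℝ, 0 ≤ t → ‖f t‖ ≤ C * Real.exp (-γ * t)) :
    Tendsto f atTop (𝓝 0) := by
  refine squeeze_zero_norm' (eventually_ge_atTop 0 |>.mono hdecay) ?_
  simpa using (Real.tendsto_exp_atBot.comp
    (tendsto_id.const_mul_atTop_of_neg (neg_lt_zero.2 hγ))).const_mul C

end ExponentialDecay

theorem Commute.integral_right {X A : Type*} [MeasurableSpace X] {μ : Measure X} [NormedRing A]
    [NormedSpace ℝ A] [IsScalarTower ℝ A A] [SMulCommClass ℝ A A] {a : A} {f : X → A}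
    (hf : Integrable f μ) (h : ∀ x, Commute a (f x)) : Commute a (∫ x, f x ∂μ) := by
  rw [Commute, SemiconjBy, ← integral_const_mul_of_integrable hf,
    ← integral_mul_const_of_integrable hf]
  exact integral_congr_ae <| ae_of_all _ fun x => h x

section Semigroup

variable {A : Type*} [NormedRing A] [NormedAlgebra ℂ A] [CompleteSpace A]

theorem hasDerivAt_exp_ofReal_smul_mul (L Q : A) (t : ℝ) :
    HasDerivAt (fun s : ℝ => exp ((s : ℂ) • L) * Q) (L * (exp ((t : ℂ) • L) * Q)) t := by
  have hexp := (hasDerivAt_exp_smul_const' L (t : ℂ)).scomp t Complex.ofRealCLM.hasDerivAt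
  simpa only [Function.comp_def, Complex.ofRealCLM_apply, Complex.ofReal_one, one_smul,
    mul_assoc] using hexp.mul_const Q

theorem mul_integral_Ioi_exp_ofReal_smul_mul (L Q : A)
    (hint : IntegrableOn (fun t : ℝ => exp ((t : ℂ) • L) * Q) (Ioi 0))
    (hlim : Tendsto (fun t : ℝ => exp ((t : ℂ) • L) * Q) atTop (𝓝 0)) :
    L * ∫ t in Ioi (0 : ℝ), exp ((t : ℂ) • L) * Q = -Q := by
  rw [← integral_const_mul_of_integrable hint,
    integral_Ioi_of_hasDerivAt_of_tendsto' (fun t _ => hasDerivAt_exp_ofReal_smul_mul L Q t)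
      (hint.const_mul L) hlim]
  simp

end Semigroup

theorem drazin_inverse_integral_general
    (E : Type*) [NormedAddCommGroup E] [NormedSpace ℂ E] [FiniteDimensional ℂ E]
    (L P : E →L[ℂ] E) (hLP : L * P = 0) (hPL : P * L = 0)
    (C γ : ℝ) (hγ : 0 < γ)
    (hdecay : ∀ t : ℝ, 0 ≤ t →
      ‖NormedSpace.exp ((t : ℂ) • L) * (1 - P)‖ ≤ C * Real.exp (-γ * t)) :
    IntegrableOn (fun t : ℝ => NormedSpace.exp ((t : ℂ) • L) * (1 - P)) (Set.Ioi 0) ∧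
    (let Lplus : E →L[ℂ] E :=
        -∫ t in Set.Ioi (0:ℝ), NormedSpace.exp ((t : ℂ) • L) * (1 - P)
     ‖Lplus‖ ≤ C / γ ∧ L * Lplus = 1 - P ∧ Lplus * L = 1 - P) := by
  have hcont : Continuous fun t : ℝ => exp ((t : ℂ) • L) * (1 - P) :=
    continuous_iff_continuousAt.2 fun t =>
      (hasDerivAt_exp_ofReal_smul_mul L (1 - P) t).continuousAt
  have hint := integrableOn_Ioi_of_norm_le_exp hγ hcont.aestronglyMeasurable hdecay
  have hLQ : Commute L (1 - P) := (Commute.one_right L).sub_right (hLP.trans hPL.symm)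
  have hcomm : Commute L (∫ t in Ioi (0 : ℝ), exp ((t : ℂ) • L) * (1 - P)) :=
    Commute.integral_right hint fun t => ((Commute.refl L).smul_right _).exp_right.mul_right hLQ
  have hLF := mul_integral_Ioi_exp_ofReal_smul_mul L (1 - P) hint
    (tendsto_atTop_zero_of_norm_le_exp hγ hdecay)
  refine ⟨hint, ?_, ?_, ?_⟩
  · simpa only [norm_neg] using norm_integral_Ioi_le_of_norm_le_exp hγ hdecay
  · rw [mul_neg, hLF, neg_neg]
  · rw [neg_mul, ← hcomm.eq, hLF, neg_neg]

/-- The Drazin-type inverse given by the Laplace integral of the semigroup. -/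
theorem drazin_inverse_integral
    (E : Type*) [NormedAddCommGroup E] [NormedSpace ℂ E] [FiniteDimensional ℂ E]
    (L P : E →L[ℂ] E) (hP : P * P = P) (hLP : L * P = 0) (hPL : P * L = 0)
    (C γ : ℝ) (hγ : 0 < γ)
    (hdecay : ∀ t : ℝ, 0 ≤ t →
      ‖NormedSpace.exp ((t : ℂ) • L) * (1 - P)‖ ≤ C * Real.exp (-γ * t)) :
    IntegrableOn (fun t : ℝ => NormedSpace.exp ((t : ℂ) • L) * (1 - P)) (Set.Ioi 0) ∧
    (let Lplus : E →L[ℂ] E :=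
        -∫ t in Set.Ioi (0:ℝ), NormedSpace.exp ((t : ℂ) • L) * (1 - P)
     ‖Lplus‖ ≤ C / γ ∧ L * Lplus = 1 - P ∧ Lplus * L = 1 - P) :=
  drazin_inverse_integral_general E L P hLP hPL C γ hγ hdecay
end

section
/- If a linear map Φ on d×d matrices is positive (maps positive semidefinite matrices to positive semidefinite matrices) and trace-preserving, then Φ is a contraction in trace norm on Hermitian matrices: ‖Φ(X)‖₁ ≤ ‖X‖₁ for every Hermitian X. -/
open Matrix
open scoped ComplexOrder

/-- The trace norm of a complex matrix: the trace of `√(XᴴX)`. -/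
noncomputable def traceNorm {m : Type*} [Fintype m] [DecidableEq m]
    (X : Matrix m m ℂ) : ℝ :=
  ((Matrix.posSemidef_conjTranspose_mul_self X).1.eigenvectorUnitary.1 *
    diagonal (((↑) : ℝ → ℂ) ∘ (√·) ∘ (Matrix.posSemidef_conjTranspose_mul_self X).1.eigenvalues) *
    (star (Matrix.posSemidef_conjTranspose_mul_self X).1.eigenvectorUnitary : Matrix m m ℂ)).trace.re

/-!
Write a Hermitian `X` as `X₊ - X₋` with `X₊ = cfc (·⁺) X` and `X₋ = cfc (·⁻) X`, so that
`‖X‖₁ = tr X₊ + tr X₋`. Then `Φ X = Φ X₊ - Φ X₋` is a difference of positive semidefinite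
matrices, and any such difference satisfies `‖P - N‖₁ ≤ tr P + tr N`; since `Φ` preserves traces,
`tr Φ X₊ + tr Φ X₋ = ‖X‖₁`.
-/

namespace Matrix

variable {n 𝕜 : Type*} [Fintype n] [DecidableEq n] [RCLike 𝕜]

lemma trace_conjStarAlgAut (u : unitary (Matrix n n 𝕜)) (A : Matrix n n 𝕜) :
    (Unitary.conjStarAlgAut 𝕜 _ u A).trace = A.trace := by
  rw [Unitary.conjStarAlgAut_apply, trace_mul_cycle, Unitary.coe_star_mul_self, one_mul]

lemma PosSemidef.conjStarAlgAut {A : Matrix n n 𝕜} (hA : A.PosSemidef)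
    (u : unitary (Matrix n n 𝕜)) : (Unitary.conjStarAlgAut 𝕜 _ u A).PosSemidef := by
  simpa [Unitary.conjStarAlgAut_apply, star_eq_conjTranspose] using
    hA.mul_mul_conjTranspose_same (u : Matrix n n 𝕜)

lemma IsHermitian.trace_cfc {A : Matrix n n 𝕜} (hA : A.IsHermitian) (f : ℝ → ℝ) :
    (cfc f A).trace = ∑ i, (f (hA.eigenvalues i) : 𝕜) := by
  rw [hA.cfc_eq, IsHermitian.cfc, trace_conjStarAlgAut, trace_diagonal]
  rfl

lemma IsHermitian.posSemidef_cfc {A : Matrix n n 𝕜} (hA : A.IsHermitian) {f : ℝ → ℝ}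
    (hf : ∀ x, 0 ≤ f x) : (cfc f A).PosSemidef := by
  rw [hA.cfc_eq, IsHermitian.cfc]
  exact (PosSemidef.diagonal fun i => by simpa using hf (hA.eigenvalues i)).conjStarAlgAut _

end Matrix

section TraceNorm

variable {n : Type*} [Fintype n] [DecidableEq n]

lemma traceNorm_eq_re_trace_cfc_sqrt (X : Matrix n n ℂ) :
    traceNorm X = (cfc Real.sqrt (Xᴴ * X)).trace.re := by
  rw [(posSemidef_conjTranspose_mul_self X).1.cfc_eq]
  rfl

lemma Matrix.IsHermitian.traceNorm_eq_sum_abs_eigenvalues {Y : Matrix n n ℂ}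
    (hY : Y.IsHermitian) : traceNorm Y = ∑ i, |hY.eigenvalues i| := by
  have hsqrt : cfc Real.sqrt (Yᴴ * Y) = cfc (fun x : ℝ => |x|) Y := by
    rw [hY.eq, ← sq, ← cfc_pow_id (R := ℝ) Y 2, ← cfc_comp _ _ Y]
    exact cfc_congr fun x _ => Real.sqrt_sq_eq_abs x
  rw [traceNorm_eq_re_trace_cfc_sqrt, hsqrt, hY.trace_cfc, Complex.re_sum]
  rfl

/-- In an eigenbasis of `P - N`, each eigenvalue is the difference of two nonnegative diagonal
entries, one of each conjugated summand. -/
lemma traceNorm_sub_le {P N : Matrix n n ℂ} (hP : P.PosSemidef) (hN : N.PosSemidef) :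
    traceNorm (P - N) ≤ (P.trace + N.trace).re := by
  have hY := hP.1.sub hN.1
  set u := star hY.eigenvectorUnitary
  set conj := Unitary.conjStarAlgAut ℂ (Matrix n n ℂ) u
  have hdiag : diagonal (RCLike.ofReal ∘ hY.eigenvalues) = conj P - conj N := by
    rw [← map_sub, hY.conjStarAlgAut_star_eigenvectorUnitary]
  have heigenvalue (i : n) : hY.eigenvalues i = (conj P i i).re - (conj N i i).re := by
    simpa using congrArg (fun M : Matrix n n ℂ => (M i i).re) hdiag
  have hdiag_nonneg {M : Matrix n n ℂ} (hM : M.PosSemidef) (i : n) : 0 ≤ (conj M i i).re :=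
    (Complex.nonneg_iff.mp (hM.conjStarAlgAut u).diag_nonneg).1
  calc traceNorm (P - N) = ∑ i, |hY.eigenvalues i| := hY.traceNorm_eq_sum_abs_eigenvalues
    _ ≤ ∑ i, ((conj P i i).re + (conj N i i).re) := by
      gcongr with i
      rw [heigenvalue i, abs_sub_le_iff]
      constructor <;> linarith [hdiag_nonneg hP i, hdiag_nonneg hN i]
    _ = (P.trace + N.trace).re := by
      rw [Finset.sum_add_distrib, ← trace_conjStarAlgAut u P, ← trace_conjStarAlgAut u N]
      simp only [Complex.add_re, trace, diag, Complex.re_sum]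
      rfl

lemma Matrix.IsHermitian.exists_posSemidef_sub_eq_and_traceNorm_eq {X : Matrix n n ℂ}
    (hX : X.IsHermitian) :
    ∃ P N : Matrix n n ℂ, P.PosSemidef ∧ N.PosSemidef ∧ P - N = X ∧
      traceNorm X = (P.trace + N.trace).re := by
  refine ⟨cfc (·⁺) X, cfc (·⁻) X, hX.posSemidef_cfc posPart_nonneg,
    hX.posSemidef_cfc negPart_nonneg, ?_, ?_⟩
  · rw [← cfc_sub (fun x : ℝ => x⁺) (fun x => x⁻) X]
    conv_rhs => rw [← cfc_id' ℝ X]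
    exact cfc_congr fun x _ => posPart_sub_negPart x
  · rw [hX.traceNorm_eq_sum_abs_eigenvalues, hX.trace_cfc, hX.trace_cfc,
      ← Finset.sum_add_distrib, Complex.re_sum]
    simp [posPart_add_negPart]

end TraceNorm

/-- A positive trace-preserving map is a trace-norm contraction on Hermitian matrices. -/
theorem positive_trace_preserving_contraction (d : ℕ)
    (Φ : Matrix (Fin d) (Fin d) ℂ →ₗ[ℂ] Matrix (Fin d) (Fin d) ℂ)
    (hpos : ∀ X : Matrix (Fin d) (Fin d) ℂ, X.PosSemidef → (Φ X).PosSemidef)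
    (htr : ∀ X : Matrix (Fin d) (Fin d) ℂ, (Φ X).trace = X.trace) :
    ∀ X : Matrix (Fin d) (Fin d) ℂ, X.IsHermitian → traceNorm (Φ X) ≤ traceNorm X := by
  intro X hX
  obtain ⟨P, N, hP, hN, rfl, hnorm⟩ := hX.exists_posSemidef_sub_eq_and_traceNorm_eq
  calc traceNorm (Φ (P - N)) = traceNorm (Φ P - Φ N) := by rw [map_sub]
    _ ≤ ((Φ P).trace + (Φ N).trace).re := traceNorm_sub_le (hpos P hP) (hpos N hN)
    _ = traceNorm (P - N) := by rw [htr, htr, hnorm]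
end
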